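/- arXiv:2402.09852 — 4 statements merged into one kernel-verified Lean document; each statement's English description precedes it below -/
import Mathlib

section
/- Let Γ be a finitely generated free abelian group and R = ⊕_{λ∈Γ} R_λ a Γ-graded k-algebra over a field k which is an integral domain, is integrally closed, has field of fractions finitely generated over k, and satisfies dim_k R_λ ≤ 1 for all λ. Then the following are equivalent: (i) R is a finitely generated k-algebra; (ii) the support Eff(R) = {λ ∈ Γ : R_λ ≠ 0} is a finitely generated monoid; (iii) the cone Eff(R)_{Q≥0} ⊂ Γ⊗Q of nonnegative rational combinations of elements of Eff(R) is a finitely generated Q≥0-monoid. -/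
/-!
With `dim R_λ ≤ 1`, a nonzero graded piece is spanned by any of its nonzero elements, so nonzero
homogeneous elements generate `R` exactly when their degrees generate `Eff(R)`: (i) ⇔ (ii).
Integral closedness makes `Eff(R)` saturated: if `β`, `γ + β` and `n • γ` are effective, with
nonzero `b`, `a`, `z` of these degrees, then `a ^ n` is a scalar multiple of `z * b ^ n`, so
`b ^ n ∣ a ^ n`, hence `b ∣ a`, and the degree-`γ` component of `a / b` is nonzero.
For (iii) ⇒ (ii), write the cone as generated by finitely many effective `w i`. Every effective `γ`
is `∑ ⌊d i⌋ • w i` plus a lattice point of the parallelepiped spanned by the `w i`, which is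
effective by saturation; as the parallelepiped holds finitely many lattice points, these together
with the `w i` generate `Eff(R)`.
-/

open scoped TensorProduct

/-- The cone of nonnegative rational combinations of elements of a set `S ⊆ Γ`
inside `ℚ ⊗[ℤ] Γ`. -/
def ratCone {Γ : Type*} [AddCommGroup Γ] (S : Set Γ) : Set (ℚ ⊗[ℤ] Γ) :=
  {y | ∃ (M : ℕ) (c : Fin M → ℚ) (v : Fin M → Γ),
    (∀ j, 0 ≤ c j) ∧ (∀ j, v j ∈ S) ∧ y = ∑ j, c j • ((1 : ℚ) ⊗ₜ[ℤ] v j)}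

theorem Submodule.le_span_singleton_of_rank_le_one {K V : Type*} [DivisionRing K]
    [AddCommGroup V] [Module K V] {p : Submodule K V} (hp : Module.rank K p ≤ 1) {x : V}
    (hx : x ∈ p) (hx0 : x ≠ 0) : p ≤ K ∙ x := by
  obtain ⟨v, hv⟩ := (rank_submodule_le_one_iff' p).1 hp
  obtain ⟨a, rfl⟩ := mem_span_singleton.1 (hv hx)
  have ha : a ≠ 0 := by rintro rfl; exact hx0 (zero_smul K v)
  rwa [span_singleton_smul_eq (IsUnit.mk0 a ha)]

theorem AddSubmonoid.fg_iff_exists_coe_eq_closure {Γ : Type*} [AddMonoid Γ]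
    (P : AddSubmonoid Γ) :
    P.FG ↔ ∃ s : Finset Γ, (P : Set Γ) = closure (s : Set Γ) := by
  simp only [AddSubmonoid.FG, SetLike.coe_set_eq, eq_comm]

namespace PointedCone

variable {R E : Type*} [Semiring R] [PartialOrder R] [IsOrderedRing R] [AddCommMonoid E]
  [Module R E]

theorem coe_hull_range {α : Type*} [Fintype α] (x : α → E) :
    (hull R (Set.range x) : Set E) =
      {y | ∃ c : α → R, (∀ i, 0 ≤ c i) ∧ y = ∑ i, c i • x i} := by
  ext y
  simp only [SetLike.mem_coe, Submodule.mem_span_range_iff_exists_fun, Set.mem_ofPred_eq]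
  constructor
  · rintro ⟨c, rfl⟩
    exact ⟨fun i => c i, fun i => (c i).2, rfl⟩
  · rintro ⟨c, hc, rfl⟩
    exact ⟨fun i => ⟨c i, hc i⟩, rfl⟩

theorem fg_iff_exists_fin (C : PointedCone R E) :
    C.FG ↔ ∃ (N : ℕ) (x : Fin N → E), (∀ i, x i ∈ C) ∧
      (C : Set E) = {y | ∃ c : Fin N → R, (∀ i, 0 ≤ c i) ∧ y = ∑ i, c i • x i} := by
  rw [Submodule.fg_iff_exists_fin_generating_family]
  refine exists_congr fun N => ⟨fun ⟨x, hx⟩ => ⟨x, ?_, ?_⟩, fun ⟨x, _, hC⟩ => ⟨x, ?_⟩⟩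
  · exact fun i => hx ▸ Submodule.subset_span (Set.mem_range_self i)
  · rw [← hx, coe_hull_range]
  · rw [← coe_hull_range] at hC
    exact SetLike.coe_injective hC.symm

end PointedCone

theorem AddSubmonoid.FG.hull_image {R Γ E F : Type*} [Semiring R] [PartialOrder R]
    [IsOrderedRing R] [AddCommMonoid Γ] [AddCommMonoid E] [Module R E] [FunLike F Γ E]
    [AddMonoidHomClass F Γ E] {M : AddSubmonoid Γ} (hM : M.FG) (f : F) :
    (PointedCone.hull R (f '' M)).FG := by
  obtain ⟨s, rfl⟩ := hM
  rw [← AddSubmonoid.coe_map, AddMonoidHom.map_mclosure]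
  unfold PointedCone.hull
  rw [Submodule.span_closure]
  exact Submodule.fg_span (s.finite_toSet.image f)

def AddSubmonoid.IsSaturated {Γ : Type*} [AddMonoid Γ] (M : AddSubmonoid Γ) : Prop :=
  ∀ ⦃γ β : Γ⦄ ⦃n : ℕ⦄, 0 < n → β ∈ M → γ + β ∈ M → n • γ ∈ M → γ ∈ M

section RationalCone

variable {Γ : Type*} [AddCommGroup Γ]

theorem ratCone_eq_hull (S : Set Γ) :
    ratCone S = PointedCone.hull ℚ (TensorProduct.mk ℤ ℚ Γ 1 '' S) := by
  ext y
  simp only [ratCone, Set.mem_ofPred_eq, SetLike.mem_coe, Submodule.mem_span_set']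
  constructor
  · rintro ⟨M, c, v, hc, hv, rfl⟩
    exact ⟨M, fun j => ⟨c j, hc j⟩, fun j => ⟨_, Set.mem_image_of_mem _ (hv j)⟩, rfl⟩
  · rintro ⟨M, c, g, rfl⟩
    choose v hv hvg using fun j => (g j).2
    exact ⟨M, fun j => c j, v, fun j => (c j).2, hv,
      Finset.sum_congr rfl fun j _ => by rw [← hvg]; rfl⟩

theorem exists_nsmul_eq_tmul_of_mem_hull (M : AddSubmonoid Γ) {x : ℚ ⊗[ℤ] Γ}
    (hx : x ∈ PointedCone.hull ℚ (TensorProduct.mk ℤ ℚ Γ 1 '' M)) :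
    ∃ n : ℕ, 0 < n ∧ ∃ a ∈ M, n • x = (1 : ℚ) ⊗ₜ[ℤ] a := by
  induction hx using Submodule.span_induction with
  | mem x hx =>
    obtain ⟨a, ha, rfl⟩ := hx
    exact ⟨1, one_pos, a, ha, one_smul _ _⟩
  | zero => exact ⟨1, one_pos, 0, zero_mem M, by simp⟩
  | add x y _ _ hx hy =>
    obtain ⟨n, hn, a, ha, hxa⟩ := hx
    obtain ⟨m, hm, b, hb, hyb⟩ := hy
    refine ⟨n * m, Nat.mul_pos hn hm, m • a + n • b,
      add_mem (nsmul_mem ha m) (nsmul_mem hb n), ?_⟩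
    rw [smul_add, TensorProduct.tmul_add, TensorProduct.tmul_smul, TensorProduct.tmul_smul,
      ← hxa, ← hyb, mul_comm, mul_smul, mul_comm, mul_smul]
  | smul c x _ hx =>
    obtain ⟨n, hn, a, ha, hxa⟩ := hx
    have hc : ((c : ℚ).den : ℚ) * c = (c : ℚ).num.natAbs := by
      rw [Nat.cast_natAbs, abs_of_nonneg (Rat.num_nonneg.2 c.2), mul_comm, Rat.mul_den_eq_num]
    refine ⟨(c : ℚ).den * n, Nat.mul_pos (c : ℚ).den_pos hn, (c : ℚ).num.natAbs • a,
      nsmul_mem ha _, ?_⟩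
    rw [TensorProduct.tmul_smul, ← hxa, ← Nonneg.coe_smul]
    simp only [← Nat.cast_smul_eq_nsmul ℚ, smul_smul, ← hc]
    push_cast
    ring_nf

theorem exists_nsmul_mem_of_tmul_mem_hull [Module.Flat ℤ Γ] (M : AddSubmonoid Γ) {γ : Γ}
    (hγ : (1 : ℚ) ⊗ₜ[ℤ] γ ∈ PointedCone.hull ℚ (TensorProduct.mk ℤ ℚ Γ 1 '' M)) :
    ∃ n : ℕ, 0 < n ∧ n • γ ∈ M := by
  obtain ⟨n, hn, a, ha, hna⟩ := exists_nsmul_eq_tmul_of_mem_hull M hγ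
  have hnγ : n • γ = a :=
    Module.Flat.tensorProduct_mk_injective ℤ Γ ℚ (by simpa [TensorProduct.tmul_smul] using hna)
  exact ⟨n, hn, hnγ ▸ ha⟩

def latticeParallelepiped {α : Type*} [Fintype α] (v : α → ℚ ⊗[ℤ] Γ) : Set Γ :=
  {γ | ∃ t ∈ Set.Icc (0 : α → ℚ) 1, (1 : ℚ) ⊗ₜ[ℤ] γ = ∑ i, t i • v i}

theorem finite_latticeParallelepiped [Module.Free ℤ Γ] [Module.Finite ℤ Γ] {α : Type*}
    [Fintype α] (v : α → ℚ ⊗[ℤ] Γ) : (latticeParallelepiped v).Finite := by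
  classical
  let b := Module.Free.chooseBasis ℤ Γ
  let B := Algebra.TensorProduct.basis ℚ b
  have hB (γ : Γ) (j) : B.repr ((1 : ℚ) ⊗ₜ[ℤ] γ) j = b.repr γ j := by
    simp [B, Algebra.TensorProduct.basis_repr_tmul]
  let K j : ℤ := ⌈∑ i, |B.repr (v i) j|⌉
  refine ((Set.finite_Icc (-K) K).preimage b.equivFun.injective.injOn).subset ?_
  rintro γ ⟨t, ⟨ht0, ht1⟩, hγ⟩
  have hbound (j) : |b.repr γ j| ≤ K j := by
    have : |(b.repr γ j : ℚ)| ≤ ∑ i, |B.repr (v i) j| := by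
      rw [← hB, hγ]
      simp only [map_sum, map_smul, Finsupp.coe_finsetSum, Finset.sum_apply,
        Finsupp.smul_apply, smul_eq_mul]
      refine (Finset.abs_sum_le_sum_abs _ _).trans (Finset.sum_le_sum fun i _ => ?_)
      rw [abs_mul, abs_of_nonneg (ht0 i)]
      exact mul_le_of_le_one_left (abs_nonneg _) (ht1 i)
    exact_mod_cast this.trans (Int.le_ceil _)
  exact ⟨fun j => (abs_le.1 (hbound j)).1, fun j => (abs_le.1 (hbound j)).2⟩

theorem exists_sub_sum_nsmul_mem_latticeParallelepiped {α : Type*} [Fintype α] (w : α → Γ)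
    {γ : Γ} {d : α → ℚ} (hd : 0 ≤ d) (hγ : (1 : ℚ) ⊗ₜ[ℤ] γ = ∑ i, d i • (1 : ℚ) ⊗ₜ[ℤ] w i) :
    ∃ q : α → ℕ, γ - ∑ i, q i • w i ∈ latticeParallelepiped fun i => (1 : ℚ) ⊗ₜ[ℤ] w i := by
  refine ⟨fun i => ⌊d i⌋₊, fun i => d i - ⌊d i⌋₊, ⟨fun i => ?_, fun i => ?_⟩, ?_⟩
  · exact sub_nonneg.2 (Nat.floor_le (hd i))
  · exact sub_le_iff_le_add'.2 (Nat.lt_floor_add_one (d i)).le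
  · simp only [TensorProduct.tmul_sub, TensorProduct.tmul_sum, TensorProduct.tmul_smul, hγ,
      sub_smul, Finset.sum_sub_distrib, Nat.cast_smul_eq_nsmul]

theorem AddSubmonoid.mem_closure_of_hull_eq [Module.Flat ℤ Γ] {M : AddSubmonoid Γ}
    (hsat : M.IsSaturated)
    {W : Finset Γ} (hWM : (W : Set Γ) ⊆ M)
    (hW : PointedCone.hull ℚ (TensorProduct.mk ℤ ℚ Γ 1 '' M) =
      PointedCone.hull ℚ (Set.range fun i : W => (1 : ℚ) ⊗ₜ[ℤ] (i : Γ)))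
    {γ : Γ} (hγ : γ ∈ M) :
    γ ∈ closure (latticeParallelepiped (fun i : W => (1 : ℚ) ⊗ₜ[ℤ] (i : Γ)) ∩ M ∪ W) := by
  have hγW : (1 : ℚ) ⊗ₜ[ℤ] γ ∈ PointedCone.hull ℚ (TensorProduct.mk ℤ ℚ Γ 1 '' M) :=
    Submodule.subset_span ⟨γ, hγ, rfl⟩
  rw [hW, ← SetLike.mem_coe, PointedCone.coe_hull_range] at hγW
  obtain ⟨d, hd, hγd⟩ := hγW
  obtain ⟨q, t, ht, htq⟩ :=
    exists_sub_sum_nsmul_mem_latticeParallelepiped (fun i : W => (i : Γ)) (d := d) hd hγd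
  set β := ∑ i, q i • (i : Γ)
  have hβ : β ∈ closure (W : Set Γ) :=
    AddSubmonoid.sum_mem _ fun i _ => nsmul_mem (subset_closure i.2) _
  have hδ : (1 : ℚ) ⊗ₜ[ℤ] (γ - β) ∈ PointedCone.hull ℚ (TensorProduct.mk ℤ ℚ Γ 1 '' M) := by
    rw [hW, ← SetLike.mem_coe, PointedCone.coe_hull_range]
    exact ⟨t, ht.1, htq⟩
  obtain ⟨n, hn, hnδ⟩ := exists_nsmul_mem_of_tmul_mem_hull M hδ
  have hδM : γ - β ∈ M := hsat hn (closure_le.2 hWM hβ) (by rwa [sub_add_cancel]) hnδ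
  rw [← sub_add_cancel γ β]
  exact add_mem (subset_closure (Or.inl ⟨⟨t, ht, htq⟩, hδM⟩))
    (closure_mono Set.subset_union_right hβ)

theorem AddSubmonoid.fg_of_fg_hull [Module.Free ℤ Γ] [Module.Finite ℤ Γ] (M : AddSubmonoid Γ)
    (hsat : M.IsSaturated)
    (hfg : (PointedCone.hull ℚ (TensorProduct.mk ℤ ℚ Γ 1 '' M)).FG) : M.FG := by
  classical
  obtain ⟨s, hsM, hs⟩ := (Submodule.fg_span_iff_fg_span_finset_subset _).1 hfg
  obtain ⟨W, hWM, rfl⟩ := Finset.subset_set_image_iff.1 hsM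
  have hW : PointedCone.hull ℚ (TensorProduct.mk ℤ ℚ Γ 1 '' M) =
      PointedCone.hull ℚ (Set.range fun i : W => (1 : ℚ) ⊗ₜ[ℤ] (i : Γ)) := by
    unfold PointedCone.hull
    rw [hs, Finset.coe_image, Set.image_eq_range]
    rfl
  have hgen :=
    ((finite_latticeParallelepiped fun i : W => (1 : ℚ) ⊗ₜ[ℤ] (i : Γ)).inter_of_left M).union
      W.finite_toSet
  refine (fg_iff_exists_coe_eq_closure M).2 ⟨hgen.toFinset, le_antisymm (fun γ hγ => ?_) ?_⟩
  · rw [hgen.coe_toFinset]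
    exact mem_closure_of_hull_eq hsat hWM hW hγ
  · rw [SetLike.coe_subset_coe, closure_le, hgen.coe_toFinset]
    exact Set.union_subset Set.inter_subset_right hWM

end RationalCone

section Graded

variable {k R Γ : Type*} [Field k] [CommRing R] [Algebra k R] [DecidableEq Γ]

section AddCommMonoid

variable [AddCommMonoid Γ] (𝒜 : Γ → Submodule k R) [GradedAlgebra 𝒜]

theorem degree_mem_of_mem_adjoin {M : AddSubmonoid Γ} {G : Set R}
    (hG : ∀ x ∈ G, ∃ γ ∈ M, x ∈ 𝒜 γ) {r : R} (hr : r ∈ Algebra.adjoin k G) {γ : Γ}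
    (hrγ : r ∈ 𝒜 γ) (hr0 : r ≠ 0) : γ ∈ M := by
  have hmon : ∀ x ∈ Submonoid.closure G, ∃ γ ∈ M, x ∈ 𝒜 γ := by
    intro x hx
    induction hx using Submonoid.closure_induction with
    | mem x hx => exact hG x hx
    | one => exact ⟨0, zero_mem M, SetLike.one_mem_graded 𝒜⟩
    | mul x y _ _ hx hy =>
      obtain ⟨α, hα, hxα⟩ := hx
      obtain ⟨β, hβ, hyβ⟩ := hy
      exact ⟨α + β, add_mem hα hβ, SetLike.mul_mem_graded hxα hyβ⟩
  have hle : Subalgebra.toSubmodule (Algebra.adjoin k G) ≤ ⨆ δ ∈ M, 𝒜 δ := by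
    rw [Algebra.adjoin_eq_span, Submodule.span_le]
    intro x hx
    obtain ⟨δ, hδ, hxδ⟩ := hmon x hx
    exact Submodule.mem_iSup_of_mem δ (Submodule.mem_iSup_of_mem hδ hxδ)
  by_contra hγ
  have hsub : ⨆ δ ∈ M, 𝒜 δ ≤ ⨆ δ ≠ γ, 𝒜 δ :=
    iSup₂_mono' fun δ hδ => ⟨δ, fun h => hγ (h ▸ hδ), le_rfl⟩
  have hdisj := (DirectSum.Decomposition.isInternal 𝒜).submodule_iSupIndep γ
  exact hr0 (Submodule.disjoint_def.1 hdisj r hrγ (hsub (hle hr)))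

theorem exists_finset_homogeneous_adjoin_eq_top [Algebra.FiniteType k R] :
    ∃ s : Finset R, Algebra.adjoin k (s : Set R) = ⊤ ∧
      ∀ x ∈ s, x ≠ 0 ∧ SetLike.IsHomogeneousElem 𝒜 x := by
  classical
  obtain ⟨F, hF⟩ := Algebra.FiniteType.out (R := k) (A := R)
  let g (i : Σ x : F, DFinsupp.support (DirectSum.decompose 𝒜 x.1)) : R :=
    DirectSum.decompose 𝒜 i.1.1 i.2
  refine ⟨Finset.univ.image g, ?_, ?_⟩
  · rw [← top_le_iff, ← hF, Algebra.adjoin_le_iff]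
    intro x hx
    rw [← DirectSum.sum_support_decompose 𝒜 x]
    exact sum_mem fun γ hγ => Algebra.subset_adjoin
      (Finset.mem_image_of_mem g (Finset.mem_univ ⟨⟨x, hx⟩, γ, hγ⟩))
  · intro y hy
    obtain ⟨⟨x, γ, hγ⟩, -, rfl⟩ := Finset.mem_image.1 hy
    exact ⟨by simpa [g] using hγ, γ, Submodule.coe_mem _⟩

variable [IsDomain R]

def effMonoid : AddSubmonoid Γ where
  carrier := {γ | 𝒜 γ ≠ ⊥}
  zero_mem' := (Submodule.ne_bot_iff _).2 ⟨1, SetLike.one_mem_graded 𝒜, one_ne_zero⟩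
  add_mem' {α β} hα hβ := by
    obtain ⟨a, ha, ha0⟩ := (Submodule.ne_bot_iff _).1 hα
    obtain ⟨b, hb, hb0⟩ := (Submodule.ne_bot_iff _).1 hβ
    exact (Submodule.ne_bot_iff _).2
      ⟨a * b, SetLike.mul_mem_graded ha hb, mul_ne_zero ha0 hb0⟩

theorem mem_effMonoid {γ : Γ} : γ ∈ effMonoid 𝒜 ↔ ∃ x ∈ 𝒜 γ, x ≠ 0 :=
  Submodule.ne_bot_iff _

theorem fg_effMonoid_of_finiteType [Algebra.FiniteType k R] : (effMonoid 𝒜).FG := by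
  classical
  obtain ⟨s, hs, hhom⟩ := exists_finset_homogeneous_adjoin_eq_top 𝒜
  choose! deg hdeg using fun x hx => (hhom x hx).2
  refine ⟨s.image deg, le_antisymm (AddSubmonoid.closure_le.2 ?_) fun γ hγ => ?_⟩
  · intro γ hγ
    obtain ⟨x, hx, rfl⟩ := Finset.mem_image.1 hγ
    exact (mem_effMonoid 𝒜).2 ⟨x, hdeg x hx, (hhom x hx).1⟩
  · obtain ⟨r, hr, hr0⟩ := (mem_effMonoid 𝒜).1 hγ
    refine degree_mem_of_mem_adjoin 𝒜 (G := s) (fun x hx => ?_)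
      (hs ▸ Algebra.mem_top) hr hr0
    exact ⟨deg x, AddSubmonoid.subset_closure (Finset.mem_image_of_mem deg hx), hdeg x hx⟩

theorem finiteType_of_fg_effMonoid (hdim : ∀ γ, Module.rank k (𝒜 γ) ≤ 1)
    (h : (effMonoid 𝒜).FG) : Algebra.FiniteType k R := by
  classical
  obtain ⟨s, hs⟩ := h
  choose! g hg using fun γ (hγ : γ ∈ effMonoid 𝒜) => (mem_effMonoid 𝒜).1 hγ
  let A := Algebra.adjoin k ((s.image g : Finset R) : Set R)
  have hA : ∀ γ ∈ effMonoid 𝒜, ∃ x ∈ A, x ∈ 𝒜 γ ∧ x ≠ 0 := by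
    rw [← hs]
    intro γ hγ
    induction hγ using AddSubmonoid.closure_induction with
    | mem σ hσ =>
      exact ⟨g σ, Algebra.subset_adjoin (Finset.mem_image_of_mem g hσ),
        hg σ (hs ▸ AddSubmonoid.subset_closure hσ)⟩
    | zero => exact ⟨1, one_mem A, SetLike.one_mem_graded 𝒜, one_ne_zero⟩
    | add α β _ _ hα hβ =>
      obtain ⟨x, hxA, hx, hx0⟩ := hα
      obtain ⟨y, hyA, hy, hy0⟩ := hβ
      exact ⟨x * y, mul_mem hxA hyA, SetLike.mul_mem_graded hx hy, mul_ne_zero hx0 hy0⟩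
  have hle (γ : Γ) : 𝒜 γ ≤ Subalgebra.toSubmodule A := by
    by_cases hγ : γ ∈ effMonoid 𝒜
    · obtain ⟨x, hxA, hx, hx0⟩ := hA γ hγ
      exact (Submodule.le_span_singleton_of_rank_le_one (hdim γ) hx hx0).trans
        ((Submodule.span_singleton_le_iff_mem _ _).2 hxA)
    · rw [not_ne_iff.1 hγ]
      exact bot_le
  refine ⟨⟨s.image g, Algebra.toSubmodule_eq_top.1 (eq_top_iff.2 ?_)⟩⟩
  rw [← (DirectSum.Decomposition.isInternal 𝒜).submodule_iSup_eq_top]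
  exact iSup_le hle

end AddCommMonoid

section AddCancelCommMonoid

variable [AddCancelCommMonoid Γ] (𝒜 : Γ → Submodule k R) [GradedAlgebra 𝒜] [IsDomain R]

theorem mem_effMonoid_of_dvd {a b : R} {β γ : Γ} (hb : b ∈ 𝒜 β) (ha : a ∈ 𝒜 (γ + β))
    (ha0 : a ≠ 0) (hba : b ∣ a) : γ ∈ effMonoid 𝒜 := by
  obtain ⟨r, rfl⟩ := hba
  refine (mem_effMonoid 𝒜).2 ⟨_, (DirectSum.decompose 𝒜 r γ).2, fun h => ha0 ?_⟩
  rw [← DirectSum.decompose_of_mem_same 𝒜 ha, add_comm,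
    DirectSum.coe_decompose_mul_add_of_left_mem 𝒜 hb, h, mul_zero]

theorem isSaturated_effMonoid [IsIntegrallyClosed R] (hdim : ∀ γ, Module.rank k (𝒜 γ) ≤ 1) :
    (effMonoid 𝒜).IsSaturated := by
  intro γ β n hn hβ hγβ hnγ
  obtain ⟨a, ha, ha0⟩ := (mem_effMonoid 𝒜).1 hγβ
  obtain ⟨b, hb, hb0⟩ := (mem_effMonoid 𝒜).1 hβ
  obtain ⟨z, hz, hz0⟩ := (mem_effMonoid 𝒜).1 hnγ
  have hzb : z * b ^ n ∈ 𝒜 (n • (γ + β)) := by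
    rw [smul_add]
    exact SetLike.mul_mem_graded hz (SetLike.pow_mem_graded n hb)
  obtain ⟨c, hc⟩ := Submodule.mem_span_singleton.1
    (Submodule.le_span_singleton_of_rank_le_one (hdim _) hzb
      (mul_ne_zero hz0 (pow_ne_zero n hb0)) (SetLike.pow_mem_graded n ha))
  have hdvd : b ^ n ∣ a ^ n := Dvd.intro_left (c • z) (by rw [smul_mul_assoc, hc])
  exact mem_effMonoid_of_dvd 𝒜 hb ha ha0 ((IsIntegrallyClosed.pow_dvd_pow_iff hn.ne').1 hdvd)

end AddCancelCommMonoid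
end Graded

theorem stmt0_general {k R Γ : Type*} [Field k] [CommRing R] [Algebra k R]
    [AddCommGroup Γ] [DecidableEq Γ] [Module.Free ℤ Γ] [Module.Finite ℤ Γ]
    (𝒜 : Γ → Submodule k R) [GradedAlgebra 𝒜]
    [IsDomain R] [IsIntegrallyClosed R]
    (hdim : ∀ γ : Γ, Module.rank k (𝒜 γ) ≤ 1) :
    List.TFAE
      [ Algebra.FiniteType k R,
        ∃ s : Finset Γ,
          {γ : Γ | 𝒜 γ ≠ ⊥} = ↑(AddSubmonoid.closure (↑s : Set Γ)),
        ∃ (N : ℕ) (x : Fin N → ℚ ⊗[ℤ] Γ),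
          (∀ i, x i ∈ ratCone {γ : Γ | 𝒜 γ ≠ ⊥}) ∧
          ratCone {γ : Γ | 𝒜 γ ≠ ⊥} =
            {y | ∃ c : Fin N → ℚ, (∀ i, 0 ≤ c i) ∧ y = ∑ i, c i • x i} ] := by
  have h2 := AddSubmonoid.fg_iff_exists_coe_eq_closure (effMonoid 𝒜)
  have h3 := PointedCone.fg_iff_exists_fin
    (PointedCone.hull ℚ (TensorProduct.mk ℤ ℚ Γ 1 '' effMonoid 𝒜))
  simp only [← SetLike.mem_coe, ← ratCone_eq_hull] at h3
  tfae_have 1 → 2 := fun _ => h2.1 (fg_effMonoid_of_finiteType 𝒜)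
  tfae_have 2 → 1 := fun h => finiteType_of_fg_effMonoid 𝒜 hdim (h2.2 h)
  tfae_have 2 → 3 := fun h => h3.1 ((h2.2 h).hull_image _)
  tfae_have 3 → 2 := fun h =>
    h2.1 ((effMonoid 𝒜).fg_of_fg_hull (isSaturated_effMonoid 𝒜 hdim) (h3.2 h))
  tfae_finish

/-- Lemma `lem-equiv-fg`: for a `Γ`-graded `k`-algebra `R` (with `Γ` a finitely generated
free abelian group) which is an integrally closed integral domain whose fraction field is a
finitely generated field extension of `k`, and with all graded pieces of dimension `≤ 1`,
the following are equivalent: (i) `R` is a finitely generated `k`-algebra;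
(ii) the support `Eff(R)` is a finitely generated monoid;
(iii) the cone `Eff(R)_{ℚ≥0}` is a finitely generated `ℚ≥0`-monoid. -/
theorem stmt0 {k R Γ : Type*} [Field k] [CommRing R] [Algebra k R]
    [AddCommGroup Γ] [DecidableEq Γ] [Module.Free ℤ Γ] [Module.Finite ℤ Γ]
    (𝒜 : Γ → Submodule k R) [GradedAlgebra 𝒜]
    [IsDomain R] [IsIntegrallyClosed R]
    [Algebra k (FractionRing R)] [IsScalarTower k R (FractionRing R)]
    (hfrac : ∃ s : Finset (FractionRing R),
      IntermediateField.adjoin k (↑s : Set (FractionRing R)) = ⊤)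
    (hdim : ∀ γ : Γ, Module.rank k (𝒜 γ) ≤ 1) :
    List.TFAE
      [ Algebra.FiniteType k R,
        ∃ s : Finset Γ,
          {γ : Γ | 𝒜 γ ≠ ⊥} = ↑(AddSubmonoid.closure (↑s : Set Γ)),
        ∃ (N : ℕ) (x : Fin N → ℚ ⊗[ℤ] Γ),
          (∀ i, x i ∈ ratCone {γ : Γ | 𝒜 γ ≠ ⊥}) ∧
          ratCone {γ : Γ | 𝒜 γ ≠ ⊥} =
            {y | ∃ c : Fin N → ℚ, (∀ i, 0 ≤ c i) ∧ y = ∑ i, c i • x i} ] :=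
  stmt0_general 𝒜 hdim
end

section
/- A submonoid X of Q^n defined by finitely many linear inequalities with rational coefficients of the form ℓ_i(λ) ≥ 0 (i.e., a rational polyhedral cone) is finitely generated as a Q≥0-monoid: there exist x_1,…,x_k ∈ X such that X = Q≥0 x_1 + ⋯ + Q≥0 x_k. -/
/-!
Fourier–Motzkin elimination. If a cone is generated by a finite set `s`, its intersection with a
half-space `0 ≤ f` is generated by the generators with `0 ≤ f x` together with the vectors
`f p • q - f q • p` for `0 ≤ f p`, `f q < 0`, all of which lie on `f = 0`. Indeed, split a point
`y` of the intersection as `a + b` with `a` in the cone of the first kind of generators and `b` in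
that of the second; if `b ≠ 0` then `f a > 0` and
`y = (f y / f a) • a + (f a)⁻¹ • (f a • b - f b • a)`, where the last vector is bilinear in `(a, b)`.
Starting from the whole space, generated by a spanning set and its negatives, one cuts by the
half-spaces `0 ≤ ℓ i` one at a time.
-/

open Set Submodule

namespace PointedCone

section Semiring

variable {R E : Type*} [Semiring R] [PartialOrder R] [IsOrderedRing R]
  [AddCommMonoid E] [Module R E]

lemma mem_hull_range_iff {ι : Type*} [Fintype ι] {x : ι → E} {y : E} :
    y ∈ hull R (range x) ↔ ∃ c : ι → R, (∀ i, 0 ≤ c i) ∧ y = ∑ i, c i • x i := by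
  rw [mem_span_range_iff_exists_fun]
  constructor
  · rintro ⟨c, rfl⟩
    exact ⟨fun i => c i, fun i => (c i).2, by simp [Nonneg.coe_smul]⟩
  · rintro ⟨c, hc, rfl⟩
    exact ⟨fun i => ⟨c i, hc i⟩, by simp [Nonneg.mk_smul]⟩

end Semiring

section CommRing

variable {R M : Type*} [CommRing R] [AddCommGroup M] [Module R M]

variable (R) in
def fourierMotzkin (f : Module.Dual R M) : M →ₗ[R] M →ₗ[R] M :=
  LinearMap.lsmul R M ∘ₗ f - (LinearMap.lsmul R M ∘ₗ f).flip

@[simp]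
lemma fourierMotzkin_apply (f : Module.Dual R M) (a b : M) :
    fourierMotzkin R f a b = f a • b - f b • a := rfl

lemma map_fourierMotzkin (f : Module.Dual R M) (a b : M) : f (fourierMotzkin R f a b) = 0 := by
  simp [mul_comm]

end CommRing

variable {𝕜 V : Type*} [Field 𝕜] [LinearOrder 𝕜] [IsStrictOrderedRing 𝕜]
  [AddCommGroup V] [Module 𝕜 V]

lemma eq_zero_or_neg_of_mem_hull {f : Module.Dual 𝕜 V} {s : Set V} (hs : ∀ x ∈ s, f x < 0)
    {b : V} (hb : b ∈ hull 𝕜 s) : b = 0 ∨ f b < 0 := by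
  induction hb using Submodule.span_induction with
  | mem x hx => exact .inr (hs x hx)
  | zero => exact .inl rfl
  | add a b _ _ ha hb =>
    rcases ha with rfl | ha <;> rcases hb with rfl | hb <;> simp_all [add_neg]
  | smul t b _ hb =>
    obtain ⟨t, ht⟩ := t
    rw [Nonneg.mk_smul]
    rcases ht.eq_or_lt with rfl | ht
    · simp
    rcases hb with rfl | hb
    · simp
    exact .inr (by simpa using mul_neg_of_pos_of_neg ht hb)

lemma fourierMotzkin_mem_hull_image2 {f : Module.Dual 𝕜 V} {s t : Set V} {a b : V}
    (ha : a ∈ hull 𝕜 s) (hb : b ∈ hull 𝕜 t) :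
    fourierMotzkin 𝕜 f a b ∈ hull 𝕜 (image2 (fourierMotzkin 𝕜 f · ·) s t) :=
  (map₂_span_span _ ((fourierMotzkin 𝕜 f).restrictScalars₁₂ _ _) s t).le
    (apply_mem_map₂ _ ha hb)

theorem hull_inf_dual_singleton (f : Module.Dual 𝕜 V) (s : Set V) :
    hull 𝕜 s ⊓ dual .id {f} = hull 𝕜 ({x ∈ s | 0 ≤ f x} ∪
      image2 (fourierMotzkin 𝕜 f · ·) {x ∈ s | 0 ≤ f x} {x ∈ s | f x < 0}) := by
  set P := {x ∈ s | 0 ≤ f x}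
  set N := {x ∈ s | f x < 0}
  refine le_antisymm ?_ (span_le.2 (union_subset ?_ ?_))
  · intro y hy
    obtain ⟨hy, hfy⟩ := mem_inf.1 hy
    replace hfy : 0 ≤ f y := by simpa using hfy
    have hs : s = P ∪ N := by ext x; simp [P, N, ← and_or_left, le_or_gt]
    obtain ⟨a, ha, b, hb, rfl⟩ := mem_sup.1 ((span_union P N).le (hs ▸ hy))
    rcases eq_zero_or_neg_of_mem_hull (fun x hx => hx.2) hb with rfl | hfb
    · rw [add_zero]
      exact span_mono subset_union_left ha
    have hfa : 0 < f a := by rw [map_add] at hfy; linarith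
    have hy : a + b = (f (a + b) / f a) • a + (f a)⁻¹ • fourierMotzkin 𝕜 f a b := by
      simp only [fourierMotzkin_apply, map_add, smul_sub, smul_smul, add_div, add_smul,
        div_self hfa.ne', inv_mul_cancel₀ hfa.ne', one_smul]
      rw [div_eq_inv_mul]
      abel
    rw [hy]
    exact add_mem (smul_mem _ (div_nonneg hfy hfa.le) (span_mono subset_union_left ha))
      (smul_mem _ (inv_nonneg.2 hfa.le)
        (span_mono subset_union_right (fourierMotzkin_mem_hull_image2 ha hb)))
  · intro x hx
    exact mem_inf.2 ⟨subset_hull hx.1, by simpa using hx.2⟩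
  · rintro _ ⟨p, hp, q, hq, rfl⟩
    refine mem_inf.2 ⟨?_, by simpa using (map_fourierMotzkin f p q).ge⟩
    show f p • q - f q • p ∈ _
    rw [sub_eq_add_neg, ← neg_smul]
    exact add_mem (smul_mem _ hp.2 (subset_hull hq.1))
      (smul_mem _ (neg_nonneg.2 hq.2.le) (subset_hull hp.1))

theorem FG.inf_dual_singleton {C : PointedCone 𝕜 V} (hC : C.FG) (f : Module.Dual 𝕜 V) :
    (C ⊓ dual .id {f}).FG := by
  obtain ⟨s, hs, rfl⟩ := fg_def.1 hC
  rw [hull_inf_dual_singleton]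
  exact fg_span ((hs.sep _).union ((hs.sep _).image2 _ (hs.sep _)))

theorem fg_top [Module.Finite 𝕜 V] : (⊤ : PointedCone 𝕜 V).FG := by
  obtain ⟨s, hs, hspan⟩ := fg_def.1 (Module.Finite.fg_top (R := 𝕜) (M := V))
  refine fg_def.2 ⟨s ∪ -s, hs.union hs.neg, top_unique fun x _ => lineal_le _ ?_⟩
  have : span 𝕜 s ≤ (hull 𝕜 (s ∪ -s)).lineal := span_le.2 fun x hx =>
    mem_lineal.2 ⟨subset_hull (.inl hx), subset_hull (.inr (by simpa using hx))⟩
  exact this (hspan ▸ mem_top)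

theorem fg_dual_id_finset [Module.Finite 𝕜 V] (s : Finset (Module.Dual 𝕜 V)) :
    (dual .id (s : Set (Module.Dual 𝕜 V))).FG := by
  classical
  induction s using Finset.induction_on with
  | empty => simpa using fg_top
  | insert f s _ ih =>
    rw [Finset.coe_insert, dual_insert, inf_comm]
    exact FG.inf_dual_singleton ih f

theorem DualFG.fg {M : Type*} [AddCommGroup M] [Module 𝕜 M] [Module.Finite 𝕜 V]
    {p : M →ₗ[𝕜] V →ₗ[𝕜] 𝕜} {C : PointedCone 𝕜 V} (hC : C.DualFG p) : C.FG := by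
  obtain ⟨s, rfl⟩ := hC.id
  exact fg_dual_id_finset s

end PointedCone

open PointedCone

/-- A submonoid of `ℚ^n` cut out by finitely many linear inequalities `ℓ i (λ) ≥ 0`
(a rational polyhedral cone) is finitely generated as a `ℚ≥0`-monoid. -/
theorem stmt3 {n m : ℕ} (ℓ : Fin m → ((Fin n → ℚ) →ₗ[ℚ] ℚ)) :
    ∃ (N : ℕ) (x : Fin N → (Fin n → ℚ)),
      (∀ j, ∀ i, 0 ≤ ℓ i (x j)) ∧
      {y : Fin n → ℚ | ∀ i, 0 ≤ ℓ i y} =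
        {y : Fin n → ℚ | ∃ c : Fin N → ℚ, (∀ j, 0 ≤ c j) ∧ y = ∑ j, c j • x j} := by
  let p : Module.Dual ℚ (Fin n → ℚ) →ₗ[ℚ] Module.Dual ℚ (Fin n → ℚ) := .id
  have mem_dual_range : ∀ y, y ∈ dual p (range ℓ) ↔ ∀ i, 0 ≤ ℓ i y := by simp [p]
  obtain ⟨N, x, hx⟩ :=
    fg_iff_exists_fin_generating_family.1 (DualFG.dual_of_finite p (finite_range ℓ)).fg
  refine ⟨N, x, fun j => (mem_dual_range _).1 (hx ▸ subset_hull (mem_range_self j)), ?_⟩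
  ext y
  exact (mem_dual_range y).symm.trans (hx ▸ mem_hull_range_iff)
end

section
/- (Picard surface divisibility lemma, inert case) Let p be a prime and λ = (λ_1, λ_2, λ_3) ∈ Z^3 with λ_1 ≥ λ_2, and let i be an integer with 0 ≤ i ≤ λ_1 − λ_2 satisfying: p | i, (p+1) | (λ_2 + i), (p^2 − 1) | (λ_1 − i − pλ_3), and i ≥ p(pλ_1 − (p−1)λ_2 − λ_3)/(p^2 − p + 1). Then there exist integers k_1, k_2, k_μ ≥ 0 and k_det ∈ Z such that λ = k_1(1,0,p) + k_2(1+p,1,p) + k_μ(p+1, p+1, p^2+p) + k_det(p+1,p+1,p+1) and i = p k_2. -/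
/-!
Solving the triangular system for the coefficients forces `k₂ = i / p`, `k₁ = λ₁ − λ₂ − i` and
`(p + 1)(k_μ + k_det) = λ₂ − k₂`, after which the third coordinate determines `(p² − 1) k_μ`.
Modulo `p² − 1`, where `p² ≡ 1`, `p` times this numerator is a combination of `λ₂ + i` times
`p (p − 1)` and `λ₁ − i − p λ₃`, so the divisibility hypotheses and `gcd(p, p² − 1) = 1` make
`k_μ` integral. Multiplied by `p`, the same numerator is `(p² − p + 1) i − p (p λ₁ − (p − 1) λ₂ − λ₃)`,
so `i ≥ F(λ)` says exactly that `k_μ ≥ 0`.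
-/

section

variable {R : Type*} [CommRing R]

/-- `(p² − 1) k_μ`, read off from the third coordinate once `k₁ = λ₁ − λ₂ − p k₂` and
`(p + 1)(k_μ + k_det) = λ₂ − k₂` are substituted. -/
def muNumerator (p l1 l2 l3 k2 : R) : R :=
  l3 - p * (l1 - l2 - p * k2) - p * k2 - (l2 - k2)

theorem isCoprime_sq_sub_one_self (p : R) : IsCoprime (p ^ 2 - 1) p :=
  ⟨-1, p, by ring⟩

theorem add_one_dvd_sub_of_dvd_add_mul {p l2 k2 : R} (h : p + 1 ∣ l2 + p * k2) :
    p + 1 ∣ l2 - k2 := by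
  have hsplit : l2 - k2 = l2 + p * k2 - (p + 1) * k2 := by ring
  rw [hsplit]
  exact dvd_sub h (dvd_mul_right _ _)

theorem sq_sub_one_dvd_muNumerator {p l1 l2 l3 k2 : R} (h2 : p + 1 ∣ l2 + p * k2)
    (h3 : p ^ 2 - 1 ∣ l1 - p * k2 - p * l3) : p ^ 2 - 1 ∣ muNumerator p l1 l2 l3 k2 := by
  refine (isCoprime_sq_sub_one_self p).dvd_of_dvd_mul_left ?_
  have hsq : p ^ 2 - 1 = (p - 1) * (p + 1) := by ring
  have hcomb : p * muNumerator p l1 l2 l3 k2 =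
      p * ((p - 1) * (l2 + p * k2)) - (l1 - p * k2 - p * l3) - (p ^ 2 - 1) * l1 := by
    unfold muNumerator; ring
  rw [hcomb]
  refine dvd_sub (dvd_sub (dvd_mul_of_dvd_right ?_ p) h3) (dvd_mul_right _ _)
  rw [hsq]
  exact mul_dvd_mul_left _ h2

theorem mul_muNumerator (p l1 l2 l3 k2 : R) :
    p * muNumerator p l1 l2 l3 k2 =
      p * k2 * (p ^ 2 - p + 1) - p * (p * l1 - (p - 1) * l2 - l3) := by
  unfold muNumerator; ring

end

section

variable {R : Type*} [CommRing R] [LinearOrder R] [IsStrictOrderedRing R]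

theorem muNumerator_nonneg {p l1 l2 l3 k2 : R} (hp : 0 < p)
    (hF : p * (p * l1 - (p - 1) * l2 - l3) ≤ p * k2 * (p ^ 2 - p + 1)) :
    0 ≤ muNumerator p l1 l2 l3 k2 := by
  rw [← mul_nonneg_iff_of_pos_left hp, mul_muNumerator]
  exact sub_nonneg.mpr hF

theorem sq_sub_self_add_one_pos (x : R) : 0 < x ^ 2 - x + 1 := by
  nlinarith [sq_nonneg (2 * x - 1)]

end

theorem stmt9_general (p : ℕ) (hp : p.Prime) (l1 l2 l3 i : ℤ)
    (hi0 : 0 ≤ i) (hi1 : i ≤ l1 - l2)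
    (hd1 : (p : ℤ) ∣ i) (hd2 : ((p : ℤ) + 1) ∣ (l2 + i))
    (hd3 : ((p : ℤ) ^ 2 - 1) ∣ (l1 - i - (p : ℤ) * l3))
    (hF : ((p : ℚ) * ((p : ℚ) * (l1 : ℚ) - ((p : ℚ) - 1) * (l2 : ℚ) - (l3 : ℚ)))
            / ((p : ℚ) ^ 2 - (p : ℚ) + 1) ≤ (i : ℚ)) :
    ∃ k1 k2 kmu kdet : ℤ, 0 ≤ k1 ∧ 0 ≤ k2 ∧ 0 ≤ kmu ∧
      l1 = k1 * 1 + k2 * (1 + (p : ℤ)) + kmu * ((p : ℤ) + 1) + kdet * ((p : ℤ) + 1) ∧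
      l2 = k2 * 1 + kmu * ((p : ℤ) + 1) + kdet * ((p : ℤ) + 1) ∧
      l3 = k1 * (p : ℤ) + k2 * (p : ℤ) + kmu * ((p : ℤ) ^ 2 + (p : ℤ)) + kdet * ((p : ℤ) + 1) ∧
      i = (p : ℤ) * k2 := by
  have hp2 : (2 : ℤ) ≤ p := mod_cast hp.two_le
  obtain ⟨k2, rfl⟩ := hd1
  have hk2 : 0 ≤ k2 := (mul_nonneg_iff_of_pos_left (by omega)).mp hi0
  obtain ⟨s, hs⟩ := add_one_dvd_sub_of_dvd_add_mul hd2
  obtain ⟨kmu, hkmu⟩ := sq_sub_one_dvd_muNumerator hd2 hd3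
  have hFint : (p : ℤ) * (p * l1 - (p - 1) * l2 - l3) ≤ p * k2 * (p ^ 2 - p + 1) := by
    rw [div_le_iff₀ (sq_sub_self_add_one_pos (p : ℚ))] at hF
    exact_mod_cast hF
  have hkmu_nonneg : 0 ≤ kmu := by
    have hN := muNumerator_nonneg (by omega) hFint
    rwa [hkmu, mul_nonneg_iff_of_pos_left (by nlinarith)] at hN
  refine ⟨l1 - l2 - p * k2, k2, kmu, s - kmu, by linarith, hk2, hkmu_nonneg, ?_, ?_, ?_, rfl⟩
  · linear_combination hs
  · linear_combination hs
  · unfold muNumerator at hkmu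
    linear_combination hkmu + hs

/-- Divisibility lemma for the inert unitary group `U(3)`: if `λ = (λ₁,λ₂,λ₃) ∈ ℤ³` with
`λ₁ ≥ λ₂` and `0 ≤ i ≤ λ₁ − λ₂` satisfies `p ∣ i`, `(p+1) ∣ (λ₂+i)`,
`(p²−1) ∣ (λ₁−i−pλ₃)` and `i ≥ p(pλ₁ − (p−1)λ₂ − λ₃)/(p²−p+1)`, then `λ` is a
combination `k₁(1,0,p) + k₂(1+p,1,p) + k_μ(p+1,p+1,p²+p) + k_det(p+1,p+1,p+1)` with
`k₁,k₂,k_μ ≥ 0`, `k_det ∈ ℤ` and `i = p k₂`. -/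
theorem stmt9 (p : ℕ) (hp : p.Prime) (l1 l2 l3 i : ℤ)
    (hl : l2 ≤ l1) (hi0 : 0 ≤ i) (hi1 : i ≤ l1 - l2)
    (hd1 : (p : ℤ) ∣ i) (hd2 : ((p : ℤ) + 1) ∣ (l2 + i))
    (hd3 : ((p : ℤ) ^ 2 - 1) ∣ (l1 - i - (p : ℤ) * l3))
    (hF : ((p : ℚ) * ((p : ℚ) * (l1 : ℚ) - ((p : ℚ) - 1) * (l2 : ℚ) - (l3 : ℚ)))
            / ((p : ℚ) ^ 2 - (p : ℚ) + 1) ≤ (i : ℚ)) :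
    ∃ k1 k2 kmu kdet : ℤ, 0 ≤ k1 ∧ 0 ≤ k2 ∧ 0 ≤ kmu ∧
      l1 = k1 * 1 + k2 * (1 + (p : ℤ)) + kmu * ((p : ℤ) + 1) + kdet * ((p : ℤ) + 1) ∧
      l2 = k2 * 1 + kmu * ((p : ℤ) + 1) + kdet * ((p : ℤ) + 1) ∧
      l3 = k1 * (p : ℤ) + k2 * (p : ℤ) + kmu * ((p : ℤ) ^ 2 + (p : ℤ)) + kdet * ((p : ℤ) + 1) ∧
      i = (p : ℤ) * k2 :=
  stmt9_general p hp l1 l2 l3 i hi0 hi1 hd1 hd2 hd3 hF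
end

section
/- (Zip cone of U(3), inert case) With ha_1 = (1,0,p), ha_2 = (1+p,1,p), ha_μ = (p+1,p+1,p^2+p), λ_det = (p+1,p+1,p+1) in Z^3, the cone Z≥0·ha_1 + Z≥0·ha_2 + Z≥0·ha_μ + Z·λ_det, taken with Q≥0-coefficients (and Q-coefficient on λ_det), equals {(λ_1,λ_2,λ_3) ∈ Q^3 : λ_1 ≥ λ_2 and (p−1)λ_1 + λ_2 − pλ_3 ≤ 0}. -/
/-!
The linear forms `x₀ - x₁` and `(p - 1) x₀ + x₁ - p x₂` both vanish on `λ_det`, and on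
`ha_1, ha_2, ha_μ` they take the values `1, p, 0` and `-(p² - p + 1), 0, -p (p² - 1)`; this gives
one inclusion. Conversely `ha_2` and `ha_μ` span the cone modulo the line `ℚ λ_det`: every `x` is
`b ha_2 + c ha_μ + d λ_det` with `b = (x₀ - x₁) / p` and
`c = -((p - 1) x₀ + x₁ - p x₂) / (p (p² - 1))`, and these are nonnegative exactly on the
right-hand side.
-/

section ZipCone

variable {K : Type*}

def zipCombination [CommRing K] (p a b c d : K) : Fin 3 → K :=
  a • ![1, 0, p] + b • ![1 + p, 1, p] + c • ![p + 1, p + 1, p ^ 2 + p]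
    + d • ![p + 1, p + 1, p + 1]

lemma zipCombination_apply_zero_sub_apply_one [CommRing K] (p a b c d : K) :
    zipCombination p a b c d 0 - zipCombination p a b c d 1 = a + p * b := by
  simp only [zipCombination, Pi.add_apply, Pi.smul_apply, Matrix.cons_val_zero,
    Matrix.cons_val_one, smul_eq_mul]
  ring

lemma zipCombination_wall [CommRing K] (p a b c d : K) :
    (p - 1) * zipCombination p a b c d 0 + zipCombination p a b c d 1
      - p * zipCombination p a b c d 2 = -((p ^ 2 - p + 1) * a + p * (p ^ 2 - 1) * c) := by
  simp only [zipCombination, Pi.add_apply, Pi.smul_apply, Matrix.cons_val_zero,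
    Matrix.cons_val_one, Matrix.cons_val_two, Matrix.head_cons, Matrix.tail_cons, smul_eq_mul]
  ring

lemma exists_eq_zipCombination [Field K] {p : K} (hp₀ : p ≠ 0) (hp₁ : p ^ 2 - 1 ≠ 0)
    (x : Fin 3 → K) :
    ∃ d : K, x = zipCombination p 0 ((x 0 - x 1) / p)
      (-((p - 1) * x 0 + x 1 - p * x 2) / (p * (p ^ 2 - 1))) d := by
  have hp₂ : p + 1 ≠ 0 := fun h => hp₁ (by rw [eq_neg_of_add_eq_zero_left h]; ring)
  refine ⟨(x 1 - (x 0 - x 1) / p) / (p + 1)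
    - (-((p - 1) * x 0 + x 1 - p * x 2) / (p * (p ^ 2 - 1))), ?_⟩
  ext i
  fin_cases i <;>
  · simp only [zipCombination, Fin.zero_eta, Fin.mk_one, Fin.reduceFinMk, Fin.isValue,
      Pi.add_apply, Pi.smul_apply, smul_eq_mul, Matrix.cons_val_zero, Matrix.cons_val_one,
      Matrix.cons_val]
    field_simp
    ring

end ZipCone

/-- Zip cone of `U(3)` in the inert case: the cone of combinations
`a·(1,0,p) + b·(1+p,1,p) + c·(p+1,p+1,p²+p) + d·(p+1,p+1,p+1)` with `a,b,c ∈ ℚ≥0`,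
`d ∈ ℚ`, equals `{(λ₁,λ₂,λ₃) ∈ ℚ³ : λ₁ ≥ λ₂ and (p−1)λ₁ + λ₂ − pλ₃ ≤ 0}`. -/
theorem stmt10 (p : ℤ) (hp : 2 ≤ p) :
    {x : Fin 3 → ℚ | ∃ a b c d : ℚ, 0 ≤ a ∧ 0 ≤ b ∧ 0 ≤ c ∧
      x = a • ![1, 0, (p : ℚ)] + b • ![1 + (p : ℚ), 1, (p : ℚ)]
        + c • ![(p : ℚ) + 1, (p : ℚ) + 1, (p : ℚ) ^ 2 + (p : ℚ)]
        + d • ![(p : ℚ) + 1, (p : ℚ) + 1, (p : ℚ) + 1]}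
    = {x : Fin 3 → ℚ | x 1 ≤ x 0 ∧ ((p : ℚ) - 1) * x 0 + x 1 - (p : ℚ) * x 2 ≤ 0} := by
  have hp₂ : (2 : ℚ) ≤ p := by exact_mod_cast hp
  have hp₀ : (0 : ℚ) < p := by linarith
  have hp₁ : (0 : ℚ) < (p : ℚ) ^ 2 - 1 := by nlinarith
  ext x
  constructor
  · rintro ⟨a, b, c, d, ha, hb, hc, hx⟩
    change x = zipCombination _ a b c d at hx
    subst hx
    have hdiff := zipCombination_apply_zero_sub_apply_one (p : ℚ) a b c d
    have hwall := zipCombination_wall (p : ℚ) a b c d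
    have hq : 0 ≤ (p : ℚ) ^ 2 - p + 1 := by nlinarith
    constructor
    · nlinarith
    · rw [hwall, neg_nonpos]
      positivity
  · rintro ⟨h₁, h₂⟩
    obtain ⟨d, hx⟩ := exists_eq_zipCombination hp₀.ne' hp₁.ne' x
    refine ⟨0, _, _, d, le_rfl, ?_, ?_, hx⟩
    · exact div_nonneg (sub_nonneg.2 h₁) hp₀.le
    · exact div_nonneg (neg_nonneg.2 h₂) (by positivity)
end
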